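/- arXiv:2102.11441 — 2 statements merged into one kernel-verified Lean document; each statement's English description precedes it below -/
import Mathlib

section
/- Local solvability modulo p: Let k ≥ 1 be an integer, let a, q be integers with (a, q) = 1, and let p be a prime with p ∤ q. Then there exist residues x₁, x₂, x₃ modulo p such that x₁ + x₂ + x₃^k ≡ 0 (mod p) and p ∤ (qx₁ + a)(qx₂ + a)(qx₃ + 1). -/
/-- Local solvability modulo `p`: if `(a,q) = 1` and `p ∤ q` is
prime, then there are residues `x₁, x₂, x₃` mod `p` with `x₁ + x₂ + x₃^k ≡ 0 (mod p)`
and `p ∤ (qx₁+a)(qx₂+a)(qx₃+1)`. -/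
theorem statement17 (k : ℕ) (hk : 1 ≤ k) (a q : ℤ) (hcop : IsCoprime a q)
    (p : ℕ) (hp : p.Prime) (hpq : ¬ (p : ℤ) ∣ q) :
    ∃ x₁ x₂ x₃ : ZMod p,
      x₁ + x₂ + x₃ ^ k = 0 ∧
      ((q : ZMod p) * x₁ + (a : ZMod p)) * ((q : ZMod p) * x₂ + (a : ZMod p)) *
          ((q : ZMod p) * x₃ + 1) ≠ 0 := by
  haveI : Fact p.Prime := ⟨hp⟩
  have hq0 : (q : ZMod p) ≠ 0 := by
    intro h
    exact hpq ((ZMod.intCast_zmod_eq_zero_iff_dvd q p).mp h)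
  have h0k : (0 : ZMod p) ^ k = 0 := zero_pow (by omega)
  by_cases ha : (a : ZMod p) = 0
  · refine ⟨1, -1, 0, by rw [h0k]; ring, ?_⟩
    simp only [ha, mul_one, mul_zero, zero_add, add_zero, mul_neg_one]
    exact mul_ne_zero hq0 (neg_ne_zero.mpr hq0)
  · exact ⟨0, 0, 0, by rw [h0k]; ring, by
      simp only [mul_zero, zero_add, add_zero]
      exact mul_ne_zero (mul_ne_zero ha ha) one_ne_zero⟩
end

section
/- Bounds for the local factors of the singular series: Let k ≥ 1 be an integer and a, q positive integers with (a, q) = 1. For a positive integer r define A(r) = (φ(q)/φ(qr))³ · Σ_{1 ≤ b ≤ r, (b,r)=1} (Σ_{s mod r, (sq+a, r)=1} e(sb/r))² · (Σ_{s mod r, (sq+1, r)=1} e(s^k b/r)). Then: (i) A(p^t) = 0 whenever p is a prime dividing q, and also whenever p is a prime with p ∤ q and t ≥ 2; and (ii) for every ε > 0 and every prime p ∤ q, |A(p)| ≪_{k,ε} p^{−3/2+ε}. -/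
open scoped Classical

/-- `e(θ) = exp(2πiθ)`. -/
noncomputable def e (θ : ℝ) : ℂ := Complex.exp (2 * (Real.pi : ℂ) * Complex.I * (θ : ℂ))

/-- The local factor
`A(r) = (φ(q)/φ(qr))³ Σ_{(b,r)=1} (Σ_{s(r),(sq+a,r)=1} e(sb/r))² (Σ_{s(r),(sq+1,r)=1} e(s^k b/r))`. -/
noncomputable def Aloc (k a q r : ℕ) : ℂ :=
  (((Nat.totient q : ℝ) / (Nat.totient (q * r) : ℝ)) ^ 3 : ℝ) *
    ∑ b ∈ (Finset.Icc 1 r).filter (fun b => Nat.Coprime b r),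
      (∑ s ∈ (Finset.range r).filter (fun s => Nat.Coprime (s * q + a) r),
          e (((s * b : ℕ) : ℝ) / (r : ℝ))) ^ 2 *
        (∑ s ∈ (Finset.range r).filter (fun s => Nat.Coprime (s * q + 1) r),
          e (((s ^ k * b : ℕ) : ℝ) / (r : ℝ)))

/-!
Put `ζ = e(1/r)`, a primitive `r`-th root of unity, so that the inner sums are sums of
`ζ ^ (s b)` over those `s` satisfying a condition that depends only on `s mod p` when
`r = p ^ t`. The condition is even constant when `p ∣ q`; summing over blocks of length `1`
(resp. `p`, when `t ≥ 2`) leaves a complete geometric sum of a nontrivial root of unity of order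
`p ^ t` (resp. `p ^ (t - 1)`), which vanishes because `p ∤ b`.

For `r = p ∤ q` each condition excludes exactly one residue, so the first sum is `-ζ ^ (c b)`,
of modulus one, and the second is `T(b) = ∑ₛ ζ ^ (s ^ k b)` up to one term. By Cauchy–Schwarz and
Parseval, `∑_b |T(b)| ≤ (p · p · #{(s, s') : s ^ k ≡ s' ^ k}) ^ (1/2) ≤ √k p ^ (3/2)`, as `x ^ k = c`
has at most `k` roots mod `p`; with `φ(q) / φ(qp) = 1 / (p - 1)` this gives
`|A(p)| ≤ 8 (√k + 1) p ^ (-3/2)`.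
-/

open Finset

lemma e_natCast_div (n r : ℕ) : e ((n : ℝ) / r) = e (1 / r) ^ n := by
  rw [e, e, ← Complex.exp_nat_mul]; push_cast; ring_nf

lemma isPrimitiveRoot_e_one_div {r : ℕ} (hr : r ≠ 0) : IsPrimitiveRoot (e (1 / r)) r := by
  have : e (1 / r) = Complex.exp (2 * Real.pi * Complex.I / r) := by rw [e]; push_cast; ring_nf
  exact this ▸ Complex.isPrimitiveRoot_exp r hr

lemma Finset.sum_range_mul_eq_sum_sum {M : Type*} [AddCommMonoid M] (g : ℕ → M) (d n : ℕ) :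
    ∑ s ∈ range (d * n), g s = ∑ j ∈ range n, ∑ i ∈ range d, g (d * j + i) := by
  induction n with
  | zero => simp
  | succ n ih => rw [Nat.mul_succ, sum_range_add, ih, sum_range_succ]

namespace IsPrimitiveRoot

variable {K : Type*} [Field K] {ζ : K} {r : ℕ}

lemma sum_range_zpow_pow_eq_ite (hζ : IsPrimitiveRoot ζ r) (x : ℤ) :
    ∑ b ∈ range r, (ζ ^ x) ^ b = if (r : ℤ) ∣ x then (r : K) else 0 := by
  split_ifs with h
  · simp [(hζ.zpow_eq_one_iff_dvd x).mpr h]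
  · have hx : ζ ^ x ≠ 1 := fun h' => h ((hζ.zpow_eq_one_iff_dvd x).mp h')
    rw [geom_sum_eq hx, ← zpow_natCast, ← zpow_mul, mul_comm, zpow_mul, zpow_natCast,
      hζ.pow_eq_one, one_zpow, sub_self, zero_div]

lemma sum_range_pow_mul_eq_zero {b : ℕ} (hζ : IsPrimitiveRoot ζ r) (hb : ¬ r ∣ b) :
    ∑ s ∈ range r, ζ ^ (s * b) = 0 := by
  have := hζ.sum_range_zpow_pow_eq_ite b
  rw [if_neg (by exact_mod_cast hb), zpow_natCast] at this
  simpa only [← pow_mul, mul_comm b] using this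

lemma sum_range_periodic_mul_pow_eq_zero {d n b : ℕ} (hζ : IsPrimitiveRoot ζ (d * n))
    {f : ℕ → K} (hf : Function.Periodic f d) (hb : ¬ n ∣ b) :
    ∑ s ∈ range (d * n), f s * ζ ^ (s * b) = 0 := by
  rcases Nat.eq_zero_or_pos (d * n) with h0 | h0
  · simp [h0]
  have hζd : IsPrimitiveRoot (ζ ^ d) n := hζ.pow h0 rfl
  have hterm : ∀ i j, f (d * j + i) * ζ ^ ((d * j + i) * b) =
      f i * ζ ^ (i * b) * (ζ ^ d) ^ (j * b) := by
    intro i j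
    have hfi : f (i + j * d) = f i := by simpa only [Nat.cast_id] using hf.nat_mul j i
    rw [add_comm, mul_comm d j, hfi]
    ring
  rw [sum_range_mul_eq_sum_sum, sum_comm]
  simp_rw [hterm, ← mul_sum, hζd.sum_range_pow_mul_eq_zero hb, mul_zero, sum_const_zero]

end IsPrimitiveRoot

lemma IsPrimitiveRoot.sum_range_norm_sum_pow_sq {ζ : ℂ} {r : ℕ} (hζ : IsPrimitiveRoot ζ r)
    {ι : Type*} (S : Finset ι) (g : ι → ℕ) :
    ∑ b ∈ range r, ‖∑ s ∈ S, ζ ^ (g s * b)‖ ^ 2 =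
      r * ∑ s ∈ S, (#{s' ∈ S | (g s' : ZMod r) = g s} : ℝ) := by
  rcases eq_or_ne r 0 with rfl | hr
  · simp
  have hpair (m m' b : ℕ) :
      ζ ^ (m * b) * (starRingEnd ℂ) (ζ ^ (m' * b)) = (ζ ^ ((m : ℤ) - m')) ^ b := by
    rw [← Complex.inv_eq_conj (by rw [norm_pow, hζ.norm'_eq_one hr, one_pow]),
      ← zpow_natCast _ b, ← zpow_mul, sub_mul, zpow_sub₀ (hζ.ne_zero hr)]
    norm_cast
  have hcount (s : ι) : ∑ s' ∈ S, (if (r : ℤ) ∣ (g s : ℤ) - g s' then (r : ℂ) else 0) =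
      #{s' ∈ S | (g s' : ZMod r) = g s} * r := by
    simp_rw [← Int.cast_natCast (R := ZMod r), ZMod.intCast_eq_intCast_iff_dvd_sub]
    rw [sum_ite, sum_const_zero, add_zero, sum_const, nsmul_eq_mul]
  apply Complex.ofReal_injective
  push_cast
  simp_rw [← Complex.mul_conj', map_sum, sum_mul_sum, hpair]
  rw [sum_comm]
  simp_rw [sum_comm (s := range r), hζ.sum_range_zpow_pow_eq_ite, hcount, mul_sum, mul_comm]

lemma card_filter_range_pow_eq_le {p k : ℕ} [Fact p.Prime] (hk : 0 < k) (c : ZMod p) :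
    #((range p).filter fun s : ℕ => (s : ZMod p) ^ k = c) ≤ k := by
  have hinj : Set.InjOn (fun s : ℕ => (s : ZMod p)) (range p : Set ℕ) := fun x hx y hy h => by
    simpa [Nat.mod_eq_of_lt (mem_range.mp hx), Nat.mod_eq_of_lt (mem_range.mp hy)] using
      (ZMod.natCast_eq_natCast_iff' x y p).mp h
  calc #((range p).filter fun s : ℕ => (s : ZMod p) ^ k = c)
      ≤ (Polynomial.nthRoots k c).toFinset.card :=
        card_le_card_of_injOn _ (fun s hs => by
          simpa [Polynomial.mem_nthRoots hk] using (mem_filter.mp hs).2)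
          (hinj.mono (filter_subset _ _))
    _ ≤ Multiset.card (Polynomial.nthRoots k c) := Multiset.toFinset_card_le _
    _ ≤ k := Polynomial.card_nthRoots k c

lemma sum_range_norm_sum_e_pow_le {p k : ℕ} [Fact p.Prime] (hk : 0 < k) :
    ∑ b ∈ range p, ‖∑ s ∈ range p, e (((s ^ k * b : ℕ) : ℝ) / p)‖ ≤ √(k * p ^ 3) := by
  have hζ := isPrimitiveRoot_e_one_div (Fact.out : p.Prime).ne_zero
  simp_rw [e_natCast_div]
  have hparseval : ∑ b ∈ range p, ‖∑ s ∈ range p, e (1 / p) ^ (s ^ k * b)‖ ^ 2 ≤ k * p ^ 2 := by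
    rw [hζ.sum_range_norm_sum_pow_sq]
    calc (p : ℝ) * ∑ s ∈ range p, (#{s' ∈ range p | ((s' ^ k : ℕ) : ZMod p) = (s ^ k : ℕ)} : ℝ)
        ≤ p * ∑ s ∈ range p, (k : ℝ) := by
          gcongr with s
          simp only [Nat.cast_pow]
          exact_mod_cast card_filter_range_pow_eq_le hk _
      _ = k * p ^ 2 := by rw [sum_const, card_range, nsmul_eq_mul]; ring
  refine le_trans (le_abs_self _) (Real.abs_le_sqrt ?_)
  calc _ ≤ (#(range p) : ℝ) * ∑ b ∈ range p, ‖∑ s ∈ range p, e (1 / p) ^ (s ^ k * b)‖ ^ 2 :=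
        sq_sum_le_card_mul_sum_sq
    _ ≤ p * (k * p ^ 2) := by rw [card_range]; gcongr
    _ = k * p ^ 3 := by ring

lemma coprime_add_prime_pow_iff {p t x y : ℕ} (hp : p.Prime) (hy : p ∣ y) :
    Nat.Coprime (x + y) (p ^ t) ↔ Nat.Coprime x (p ^ t) := by
  rcases Nat.eq_zero_or_pos t with rfl | ht
  · simp
  rw [Nat.coprime_pow_right_iff ht, Nat.coprime_pow_right_iff ht, Nat.coprime_comm,
    hp.coprime_iff_not_dvd, Nat.coprime_comm, hp.coprime_iff_not_dvd, Nat.dvd_add_left hy]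

lemma Aloc_prime_pow_eq_zero (k a : ℕ) {q p t d n : ℕ} (hp : p.Prime) (hdn : d * n = p ^ t)
    (hpn : p ∣ n) (hpdq : p ∣ d * q) : Aloc k a q (p ^ t) = 0 := by
  have hζ : IsPrimitiveRoot (e (1 / ((p ^ t : ℕ) : ℝ))) (d * n) := by
    rw [hdn]; exact isPrimitiveRoot_e_one_div (pow_ne_zero t hp.ne_zero)
  have hf : Function.Periodic
      (fun s => if Nat.Coprime (s * q + a) (p ^ t) then (1 : ℂ) else 0) d := by
    intro s
    simp only [add_mul, add_right_comm _ (d * q), coprime_add_prime_pow_iff hp hpdq]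
  rw [Aloc, sum_eq_zero, mul_zero]
  intro b hb
  have hpb : ¬ p ∣ b := hp.coprime_iff_not_dvd.mp <|
    ((mem_filter.mp hb).2.coprime_dvd_right (hpn.trans (hdn ▸ dvd_mul_left n d))).symm
  have hsum : ∑ s ∈ (range (p ^ t)).filter (fun s => Nat.Coprime (s * q + a) (p ^ t)),
      e (((s * b : ℕ) : ℝ) / ((p ^ t : ℕ) : ℝ)) = ∑ s ∈ range (d * n),
        (if Nat.Coprime (s * q + a) (p ^ t) then (1 : ℂ) else 0) *
          e (1 / ((p ^ t : ℕ) : ℝ)) ^ (s * b) := by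
    rw [sum_filter, hdn]
    simp_rw [ite_mul, one_mul, zero_mul, e_natCast_div]
  rw [hsum, hζ.sum_range_periodic_mul_pow_eq_zero hf fun h => hpb (hpn.trans h),
    zero_pow two_ne_zero, zero_mul]

lemma filter_coprime_mul_add_eq_erase {p q : ℕ} [Fact p.Prime] (hpq : ¬ p ∣ q) (a : ℕ) :
    (range p).filter (fun s => Nat.Coprime (s * q + a) p) =
      (range p).erase (-(a : ZMod p) / q).val := by
  have hq : (q : ZMod p) ≠ 0 := by rwa [Ne, ZMod.natCast_eq_zero_iff]
  ext s
  simp only [mem_filter, mem_erase, mem_range, and_comm (b := s < p), and_congr_right_iff]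
  intro hs
  have hval (c : ZMod p) : s = c.val ↔ (s : ZMod p) = c :=
    ⟨fun h => h ▸ ZMod.natCast_zmod_val c, fun h => h ▸ (ZMod.val_natCast_of_lt hs).symm⟩
  rw [Nat.coprime_comm, (Fact.out : p.Prime).coprime_iff_not_dvd, ← ZMod.natCast_eq_zero_iff,
    Ne, hval, eq_div_iff hq, eq_neg_iff_add_eq_zero]
  push_cast
  rfl

lemma norm_sq_mul_sum_filter_coprime_e_le {p q : ℕ} [Fact p.Prime] (hpq : ¬ p ∣ q) (k a : ℕ)
    {b : ℕ} (hb : ¬ p ∣ b) :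
    ‖(∑ s ∈ (range p).filter (fun s => Nat.Coprime (s * q + a) p),
          e (((s * b : ℕ) : ℝ) / p)) ^ 2 *
        ∑ s ∈ (range p).filter (fun s => Nat.Coprime (s * q + 1) p),
          e (((s ^ k * b : ℕ) : ℝ) / p)‖
      ≤ ‖∑ s ∈ range p, e (((s ^ k * b : ℕ) : ℝ) / p)‖ + 1 := by
  have hζ := isPrimitiveRoot_e_one_div (Fact.out : p.Prime).ne_zero
  have hnorm (m : ℕ) : ‖e (1 / p) ^ m‖ = 1 := by
    rw [norm_pow, hζ.norm'_eq_one (Fact.out : p.Prime).ne_zero, one_pow]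
  simp_rw [filter_coprime_mul_add_eq_erase hpq, e_natCast_div]
  rw [sum_erase_eq_sub (mem_range.mpr (ZMod.val_lt _)),
    sum_erase_eq_sub (mem_range.mpr (ZMod.val_lt _)), hζ.sum_range_pow_mul_eq_zero hb,
    norm_mul, norm_pow, zero_sub, norm_neg, hnorm, one_pow, one_mul]
  exact (norm_sub_le _ _).trans_eq (by rw [hnorm])

lemma totient_div_totient_mul_prime {p q : ℕ} (hp : p.Prime) (hq : q ≠ 0) (hpq : ¬ p ∣ q) :
    (Nat.totient q : ℝ) / Nat.totient (q * p) = ((p : ℝ) - 1)⁻¹ := by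
  rw [Nat.totient_mul ((hp.coprime_iff_not_dvd.mpr hpq).symm), Nat.totient_prime hp, Nat.cast_mul,
    Nat.cast_sub hp.one_le, Nat.cast_one,
    div_mul_cancel_left₀ (by exact_mod_cast (Nat.totient_pos.mpr (Nat.pos_of_ne_zero hq)).ne')]

lemma inv_sub_one_pow_three_mul_le {x K : ℝ} (hx : 2 ≤ x) (hK : 0 ≤ K) :
    (x - 1)⁻¹ ^ 3 * (√(K * x ^ 3) + x) ≤ 8 * (√K + 1) * x ^ (-(3 : ℝ) / 2) := by
  set u := x ^ ((3 : ℝ) / 2)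
  have hu0 : 0 < u := by positivity
  have hu2 : u ^ 2 = x ^ 3 := by
    rw [← Real.rpow_mul_natCast (by linarith)]; norm_num
  have hxu : x ≤ u := by
    simpa using Real.rpow_le_rpow_of_exponent_le (by linarith : 1 ≤ x) (by norm_num : 1 ≤ (3 : ℝ) / 2)
  have hinv : (x - 1)⁻¹ ≤ 2 / x := by
    rw [inv_eq_one_div, div_le_div_iff₀ (by linarith) (by linarith)]; linarith
  calc (x - 1)⁻¹ ^ 3 * (√(K * x ^ 3) + x) ≤ (2 / x) ^ 3 * ((√K + 1) * u) := by
        rw [Real.sqrt_mul hK, ← hu2, Real.sqrt_sq hu0.le]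
        gcongr
        · exact inv_nonneg.mpr (by linarith)
        · nlinarith [Real.sqrt_nonneg K]
    _ = 8 * (√K + 1) * u⁻¹ := by
        rw [div_pow, ← hu2]; field_simp; ring
    _ = 8 * (√K + 1) * x ^ (-(3 : ℝ) / 2) := by rw [neg_div, Real.rpow_neg (by linarith)]

theorem norm_Aloc_prime_le {k p : ℕ} [Fact p.Prime] (hk : 0 < k) (a : ℕ) {q : ℕ} (hq : q ≠ 0)
    (hpq : ¬ p ∣ q) : ‖Aloc k a q p‖ ≤ 8 * (√k + 1) * p ^ (-(3 : ℝ) / 2) := by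
  have hp : p.Prime := Fact.out
  have hscale : 0 ≤ ((p : ℝ) - 1)⁻¹ ^ 3 :=
    pow_nonneg (inv_nonneg.mpr (sub_nonneg.mpr (by exact_mod_cast hp.one_le))) 3
  have hB : (Icc 1 p).filter (fun b => Nat.Coprime b p) ⊆ range p := by
    intro b hb
    simp only [mem_filter, mem_Icc] at hb
    refine mem_range.mpr (lt_of_le_of_ne hb.1.2 ?_)
    rintro rfl
    exact hp.one_lt.ne' ((Nat.coprime_self _).mp hb.2)
  rw [Aloc, totient_div_totient_mul_prime hp hq hpq, norm_mul, Complex.norm_real,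
    Real.norm_of_nonneg hscale]
  calc _ ≤ ((p : ℝ) - 1)⁻¹ ^ 3 * (√(k * p ^ 3) + p) := by
        gcongr
        calc _ ≤ ∑ b ∈ (Icc 1 p).filter (fun b => Nat.Coprime b p),
              (‖∑ s ∈ range p, e (((s ^ k * b : ℕ) : ℝ) / p)‖ + 1) :=
            (norm_sum_le _ _).trans <| sum_le_sum fun b hb =>
              norm_sq_mul_sum_filter_coprime_e_le hpq k a
                (hp.coprime_iff_not_dvd.mp (mem_filter.mp hb).2.symm)
          _ ≤ ∑ b ∈ range p, (‖∑ s ∈ range p, e (((s ^ k * b : ℕ) : ℝ) / p)‖ + 1) :=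
            sum_le_sum_of_subset_of_nonneg hB fun _ _ _ => by positivity
          _ ≤ √(k * p ^ 3) + p := by
            rw [sum_add_distrib, sum_const, card_range, nsmul_one]
            gcongr
            exact sum_range_norm_sum_e_pow_le hk
    _ ≤ 8 * (√k + 1) * p ^ (-(3 : ℝ) / 2) :=
        inv_sub_one_pow_three_mul_le (by exact_mod_cast hp.two_le) k.cast_nonneg

/-- Bounds for the local factors of the singular series:
(i) `A(p^t) = 0` when `p ∣ q`, and when `p ∤ q` and `t ≥ 2`;
(ii) for `p ∤ q`, `|A(p)| ≪_{k,ε} p^{-3/2+ε}`. -/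
theorem statement18 (k : ℕ) (hk : 1 ≤ k) (ε : ℝ) (hε : 0 < ε) :
    ∃ C : ℝ, 0 < C ∧
      ∀ a q : ℕ, 0 < a → 0 < q → Nat.Coprime a q →
        (∀ p : ℕ, p.Prime → ∀ t : ℕ, 1 ≤ t →
          (p ∣ q → Aloc k a q (p ^ t) = 0) ∧
          (¬ p ∣ q → 2 ≤ t → Aloc k a q (p ^ t) = 0)) ∧
        (∀ p : ℕ, p.Prime → ¬ p ∣ q →
          ‖Aloc k a q p‖ ≤ C * (p : ℝ) ^ (-(3 : ℝ) / 2 + ε)) := by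
  refine ⟨8 * (√k + 1), by positivity, fun a q _ hq _ => ⟨fun p hp t ht => ⟨fun hpq => ?_,
    fun _ ht2 => ?_⟩, fun p hp hpq => ?_⟩⟩
  · exact Aloc_prime_pow_eq_zero k a hp (one_mul _) (dvd_pow_self p (by omega))
      ((one_mul q).symm ▸ hpq)
  · obtain ⟨u, rfl⟩ : ∃ u, t = u + 1 := ⟨t - 1, by omega⟩
    exact Aloc_prime_pow_eq_zero k a hp (pow_succ' p u).symm (dvd_pow_self p (by omega))
      (dvd_mul_right p q)
  · have := Fact.mk hp
    calc ‖Aloc k a q p‖ ≤ 8 * (√k + 1) * p ^ (-(3 : ℝ) / 2) := norm_Aloc_prime_le hk a hq.ne' hpq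
      _ ≤ 8 * (√k + 1) * p ^ (-(3 : ℝ) / 2 + ε) := by
        gcongr
        · exact_mod_cast hp.one_le
        · linarith
end
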